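/- arXiv:math/0503114 — 4 statements merged into one kernel-verified Lean document; each statement's English description precedes it below -/
import Mathlib

section
/- For nonnegative integers k, m, r with 2k \le m, the coefficient of q^r in h_{m-2k}(\{1,q\}^{k+1})(1-q)^{2k+1} equals (-1)^{r+m} \binom{m+1}{r} \binom{r-k-1}{m-2k}, i.e. \sum_{i=0}^{m-2k} (-1)^{r-i} \binom{k+i}{k}\binom{m-k-i}{k}\binom{2k+1}{r-i} = (-1)^{r+m}\binom{m+1}{r}\binom{r-k-1}{m-2k}. -/
/-!
Put `n = m - 2k` and regard both sides as functions `F(n, r)`. Both satisfy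
`(n + 2) F(n + 2, r + 1) + (n + 2k + 2) F(n, r) = (n + k + 2) (F(n + 1, r + 1) + F(n + 1, r))`,
and they agree for `n = 0`, for `n = 1` and for `r = 0`, which determines `F`. For the sum, once
the two boundary terms are split off, the recurrence holds summand by summand, by an identity for
the products `C(k + i, k) C(k + j, k)` that follows from
`(j + 1) C(k + j + 1, k) = (k + j + 1) C(k + j, k)`.
For the closed form it follows from Pascal's rule and absorption, which `ichoose` inherits from
`Ring.choose`.
-/

open Finset

/-- Generalized binomial coefficient for integer arguments:
`ichoose a b = a (a-1) ⋯ (a-b+1) / b!` for `b ≥ 0`, and `0` for `b < 0`. -/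
def ichoose (a b : ℤ) : ℤ :=
  if b < 0 then 0
  else if 0 ≤ a then (a.toNat.choose b.toNat : ℤ)
  else (-1) ^ b.toNat * ((b - 1 - a).toNat.choose b.toNat : ℤ)

lemma eq_of_recurrence {R : Type*} [Ring R] [IsDomain R] {F G : ℕ → ℕ → R}
    (a b c : ℕ → R) (ha : ∀ n, a n ≠ 0)
    (hF : ∀ n r, a n * F (n + 2) (r + 1) + b n * F n r = c n * (F (n + 1) (r + 1) + F (n + 1) r))
    (hG : ∀ n r, a n * G (n + 2) (r + 1) + b n * G n r = c n * (G (n + 1) (r + 1) + G (n + 1) r))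
    (h0 : F 0 = G 0) (h1 : F 1 = G 1) (hr : ∀ n, F n 0 = G n 0) : F = G := by
  funext n
  induction n using Nat.twoStepInduction with
  | zero => exact h0
  | one => exact h1
  | more n ihn ihn1 =>
    funext r
    cases r with
    | zero => exact hr _
    | succ r =>
      refine mul_left_cancel₀ (ha n) ?_
      rw [eq_sub_of_add_eq (hF n r), eq_sub_of_add_eq (hG n r), ihn, ihn1]

lemma ichoose_of_neg (a : ℤ) {b : ℤ} (hb : b < 0) : ichoose a b = 0 := if_pos hb

lemma ichoose_neg_sub_one (c n : ℕ) : ichoose (-c - 1) n = (-1) ^ n * (c + n).choose n := by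
  rw [ichoose, if_neg (by omega), if_neg (by omega), Int.toNat_natCast,
    show ((n : ℤ) - 1 - (-c - 1)).toNat = c + n by omega]

lemma ichoose_eq_ringChoose (a : ℤ) (n : ℕ) : ichoose a n = Ring.choose a n := by
  rcases le_or_gt 0 a with ha | ha
  · lift a to ℕ using ha
    simp [ichoose, Ring.choose_natCast]
  · obtain ⟨c, rfl⟩ : ∃ c : ℕ, a = -c - 1 := ⟨(-a - 1).toNat, by omega⟩
    rw [ichoose_neg_sub_one, show (-c - 1 : ℤ) = -((c + 1 : ℕ) : ℤ) by push_cast; ring,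
      Ring.choose_neg, show ((c + 1 : ℕ) : ℤ) + n - 1 = (c + n : ℕ) by push_cast; ring,
      Ring.choose_natCast, Units.smul_def, Int.negOnePow_def]
    simp

lemma ichoose_natCast (N n : ℕ) : ichoose N n = N.choose n := by
  rw [ichoose_eq_ringChoose, Ring.choose_natCast]

lemma ichoose_zero_right (a : ℤ) : ichoose a 0 = 1 := by
  simpa [Ring.choose_zero_right] using ichoose_eq_ringChoose a 0

lemma ichoose_one_right (a : ℤ) : ichoose a 1 = a := by
  simpa [Ring.choose_one_right] using ichoose_eq_ringChoose a 1

lemma ichoose_succ_succ (a b : ℤ) :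
    ichoose (a + 1) (b + 1) = ichoose a b + ichoose a (b + 1) := by
  rcases lt_trichotomy b (-1) with hb | rfl | hb
  · simp [ichoose_of_neg, show b < 0 by omega, show b + 1 < 0 by omega]
  · simp [ichoose_of_neg, ichoose_zero_right]
  · lift b to ℕ using (by omega)
    have := Ring.choose_succ_succ a b
    rw [← ichoose_eq_ringChoose, ← ichoose_eq_ringChoose, ← ichoose_eq_ringChoose] at this
    exact_mod_cast this

lemma mul_ichoose (a b : ℤ) : b * ichoose a b = a * ichoose (a - 1) (b - 1) := by
  rcases le_or_gt b 0 with hb | hb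
  · rw [ichoose_of_neg _ (by omega : b - 1 < 0)]
    rcases hb.lt_or_eq with hb | rfl
    · rw [ichoose_of_neg _ hb]; ring
    · ring
  · obtain ⟨n, rfl⟩ : ∃ n : ℕ, b = n + 1 := ⟨(b - 1).toNat, by omega⟩
    have := Ring.choose_smul_choose a (Nat.le_add_left 1 n)
    simp only [Nat.choose_one_right, Nat.add_sub_cancel, Ring.choose_one_right,
      nsmul_eq_mul] at this
    rw [add_sub_cancel_right, ← Nat.cast_succ, ichoose_eq_ringChoose, ichoose_eq_ringChoose]
    push_cast at this ⊢
    exact this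

lemma mul_ichoose_eq_mul_ichoose_sub_one (a b : ℤ) :
    b * ichoose a b = (a - b + 1) * ichoose a (b - 1) := by
  have h := ichoose_succ_succ (a - 1) (b - 1 - 1)
  rw [sub_add_cancel, sub_add_cancel] at h
  linear_combination mul_ichoose a b + mul_ichoose a (b - 1) - a * h

lemma ichoose_product_recurrence (n k r : ℤ) :
    (n + 2 * k + 2) * (ichoose (n + 2 * k + 1) r * ichoose (r - k - 1) n)
      - (n + 2) * (ichoose (n + 2 * k + 3) (r + 1) * ichoose (r - k) (n + 2))
    = (n + k + 2) * (ichoose (n + 2 * k + 2) (r + 1) * ichoose (r - k) (n + 1)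
      - ichoose (n + 2 * k + 2) r * ichoose (r - k - 1) (n + 1)) := by
  have h1 : (n + 2) * ichoose (r - k) (n + 2) = (r - k) * ichoose (r - k - 1) (n + 1) := by
    rw [mul_ichoose]; ring_nf
  have h2 : ichoose (r - k) (n + 1) = ichoose (r - k - 1) n + ichoose (r - k - 1) (n + 1) := by
    rw [← ichoose_succ_succ]; ring_nf
  have h3 : ichoose (n + 2 * k + 3) (r + 1)
      = ichoose (n + 2 * k + 2) r + ichoose (n + 2 * k + 2) (r + 1) := by
    rw [← ichoose_succ_succ]; ring_nf
  have h4 : (r + 1) * ichoose (n + 2 * k + 2) (r + 1)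
      = (n + 2 * k + 2 - r) * ichoose (n + 2 * k + 2) r := by
    rw [mul_ichoose_eq_mul_ichoose_sub_one]; ring_nf
  have h5 : (r + 1) * ichoose (n + 2 * k + 2) (r + 1)
      = (n + 2 * k + 2) * ichoose (n + 2 * k + 1) r := by
    rw [mul_ichoose]; ring_nf
  have h6 : (n + 1) * ichoose (r - k - 1) (n + 1) = (r - k - 1 - n) * ichoose (r - k - 1) n := by
    rw [mul_ichoose_eq_mul_ichoose_sub_one]; ring_nf
  linear_combination
    (-ichoose (n + 2 * k + 3) (r + 1)) * h1
    + (-(n + k + 2) * ichoose (n + 2 * k + 2) (r + 1)) * h2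
    + (-(r - k) * ichoose (r - k - 1) (n + 1)) * h3
    + (-ichoose (r - k - 1) (n + 1)) * h4
    + (-ichoose (r - k - 1) n) * h5
    + (-ichoose (n + 2 * k + 2) (r + 1)) * h6

lemma succ_mul_choose_add_succ (k j : ℕ) :
    (j + 1) * (k + (j + 1)).choose k = (k + j + 1) * (k + j).choose k := by
  have := Nat.choose_mul_succ_eq (k + j) k
  rw [show k + j + 1 - k = j + 1 by omega] at this
  rw [← add_assoc]; linarith

lemma choose_mul_choose_recurrence (k i j : ℕ) :
    (i + j + 2) * ((k + (i + 1)).choose k * (k + (j + 1)).choose k)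
      + (i + j + 2 * k + 2) * ((k + i).choose k * (k + j).choose k)
    = (i + j + k + 2) * ((k + (i + 1)).choose k * (k + j).choose k
      + (k + i).choose k * (k + (j + 1)).choose k) := by
  have hi := succ_mul_choose_add_succ k i
  have hj := succ_mul_choose_add_succ k j
  zify at hi hj ⊢
  apply mul_left_cancel₀ (by positivity : ((i : ℤ) + 1) * ((j : ℤ) + 1) ≠ 0)
  linear_combination (((j : ℤ) + 1) * ((i + j + 2) * (k + (j + 1)).choose k
    - (i + j + k + 2) * (k + j).choose k)) * hi + (k * (j + 1) * (k + i).choose k : ℤ) * hj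

def coeffTerm (k r i j : ℕ) : ℤ :=
  (-1) ^ (r + i) * ((k + i).choose k * (k + j).choose k : ℕ) * ichoose (2 * k + 1) ((r : ℤ) - i)

/-- With `n = m - 2k`, `coeffSum k n r` is the coefficient of `q ^ r` in
`h_n({1,q}^{k+1}) (1 - q) ^ (2k + 1)`; the summation index `(i, j)` stands for `(i, m - 2k - i)`. -/
def coeffSum (k n r : ℕ) : ℤ :=
  ∑ p ∈ antidiagonal n, coeffTerm k r p.1 p.2

lemma coeffTerm_recurrence (k r i j : ℕ) :
    ((i : ℤ) + j + 2) * coeffTerm k (r + 1) (i + 1) (j + 1)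
      + ((i : ℤ) + j + 2 * k + 2) * coeffTerm k r i j
    = ((i : ℤ) + j + k + 2) * (coeffTerm k (r + 1) (i + 1) j + coeffTerm k r i (j + 1)) := by
  have key := congrArg
    (fun x : ℕ => (-1 : ℤ) ^ (r + i) * ichoose (2 * k + 1) ((r : ℤ) - i) * x)
    (choose_mul_choose_recurrence k i j)
  have hr : ((r + 1 : ℕ) : ℤ) - (i + 1 : ℕ) = (r : ℤ) - i := by push_cast; ring
  simp only [coeffTerm, hr, show r + 1 + (i + 1) = r + i + 2 by ring, pow_add]
  push_cast at key ⊢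
  linear_combination key

lemma coeffTerm_boundary (k n r : ℕ) :
    ((n : ℤ) + 2) * (coeffTerm k (r + 1) 0 (n + 2) + coeffTerm k (r + 1) (n + 2) 0)
      = ((n : ℤ) + k + 2) * (coeffTerm k (r + 1) 0 (n + 1) + coeffTerm k r (n + 1) 0) := by
  have hc : ((n : ℤ) + 2) * (k + n + 2).choose k = (k + n + 2) * (k + n + 1).choose k := by
    exact_mod_cast succ_mul_choose_add_succ k (n + 1)
  have edge : ((n : ℤ) + 2) * coeffTerm k (r + 1) 0 (n + 2)
      = ((n : ℤ) + k + 2) * coeffTerm k (r + 1) 0 (n + 1) := by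
    simp only [coeffTerm, Nat.choose_self, Nat.cast_zero, sub_zero, add_zero]
    push_cast [← add_assoc]
    linear_combination ((-1) ^ (r + 1) * ichoose (2 * k + 1) (r + 1) : ℤ) * hc
  have edge' : ((n : ℤ) + 2) * coeffTerm k (r + 1) (n + 2) 0
      = ((n : ℤ) + k + 2) * coeffTerm k r (n + 1) 0 := by
    have hr : ((r + 1 : ℕ) : ℤ) - (n + 2 : ℕ) = (r : ℤ) - (n + 1 : ℕ) := by
      push_cast; ring
    simp only [coeffTerm, Nat.choose_self, add_zero, hr,
      show r + 1 + (n + 2) = r + (n + 1) + 2 by ring, pow_add]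
    push_cast [← add_assoc]
    linear_combination ((-1) ^ (r + (n + 1)) * ichoose (2 * k + 1) (r - (n + 1)) : ℤ) * hc
  linear_combination edge + edge'

lemma coeffSum_recurrence (k n r : ℕ) :
    ((n : ℤ) + 2) * coeffSum k (n + 2) (r + 1) + ((n : ℤ) + 2 * k + 2) * coeffSum k n r
      = ((n : ℤ) + k + 2) * (coeffSum k (n + 1) (r + 1) + coeffSum k (n + 1) r) := by
  have inner : ∑ p ∈ antidiagonal n, (((n : ℤ) + 2) * coeffTerm k (r + 1) (p.1 + 1) (p.2 + 1)
      + ((n : ℤ) + 2 * k + 2) * coeffTerm k r p.1 p.2) = ∑ p ∈ antidiagonal n,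
      ((n : ℤ) + k + 2) * (coeffTerm k (r + 1) (p.1 + 1) p.2 + coeffTerm k r p.1 (p.2 + 1)) := by
    refine sum_congr rfl fun p hp => ?_
    rw [Finset.HasAntidiagonal.mem_antidiagonal] at hp
    subst hp
    exact coeffTerm_recurrence k r p.1 p.2
  have e2 : coeffSum k (n + 2) (r + 1) = coeffTerm k (r + 1) 0 (n + 2)
      + coeffTerm k (r + 1) (n + 2) 0
      + ∑ p ∈ antidiagonal n, coeffTerm k (r + 1) (p.1 + 1) (p.2 + 1) := by
    rw [coeffSum, Nat.sum_antidiagonal_succ, Nat.sum_antidiagonal_succ', ← add_assoc]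
  have e1 : coeffSum k (n + 1) (r + 1) = coeffTerm k (r + 1) 0 (n + 1)
      + ∑ p ∈ antidiagonal n, coeffTerm k (r + 1) (p.1 + 1) p.2 :=
    Nat.sum_antidiagonal_succ
  have e1' : coeffSum k (n + 1) r = coeffTerm k r (n + 1) 0
      + ∑ p ∈ antidiagonal n, coeffTerm k r p.1 (p.2 + 1) :=
    Nat.sum_antidiagonal_succ'
  rw [e2, e1, e1', coeffSum]
  simp only [sum_add_distrib, mul_sum, mul_add] at inner ⊢
  linear_combination inner + coeffTerm_boundary k n r

def coeffFormula (k n r : ℕ) : ℤ :=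
  (-1) ^ (r + n) * ichoose (n + 2 * k + 1) r * ichoose ((r : ℤ) - k - 1) n

lemma coeffFormula_recurrence (k n r : ℕ) :
    ((n : ℤ) + 2) * coeffFormula k (n + 2) (r + 1)
      + ((n : ℤ) + 2 * k + 2) * coeffFormula k n r
      = ((n : ℤ) + k + 2) * (coeffFormula k (n + 1) (r + 1) + coeffFormula k (n + 1) r) := by
  have h := ichoose_product_recurrence n k r
  simp only [coeffFormula]
  push_cast
  rw [show (n : ℤ) + 2 + 2 * k + 1 = n + 2 * k + 3 by ring,
    show (n : ℤ) + 1 + 2 * k + 1 = n + 2 * k + 2 by ring,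
    show (r : ℤ) + 1 - k - 1 = r - k by ring]
  linear_combination (-1) ^ (r + n) * h

lemma coeffSum_zero_left (k r : ℕ) : coeffSum k 0 r = coeffFormula k 0 r := by
  simp [coeffSum, coeffTerm, coeffFormula, ichoose_zero_right]

lemma coeffSum_one_left (k r : ℕ) : coeffSum k 1 r = coeffFormula k 1 r := by
  have pascal := ichoose_succ_succ (2 * k + 1) (r - 1)
  have absorb := mul_ichoose (2 * k + 2) r
  rw [sub_add_cancel, show (2 * k + 1 + 1 : ℤ) = 2 * k + 2 by ring] at pascal
  rw [show (2 * k + 2 - 1 : ℤ) = 2 * k + 1 by ring] at absorb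
  simp only [coeffSum, coeffTerm, coeffFormula, Nat.sum_antidiagonal_succ, Nat.antidiagonal_zero,
    sum_singleton, add_zero, Nat.choose_self, Nat.choose_succ_self_right, Nat.cast_zero,
    Nat.cast_one, sub_zero, ichoose_one_right]
  push_cast
  rw [show (1 + 2 * k + 1 : ℤ) = 2 * k + 2 by ring]
  linear_combination (-1) ^ r * absorb - (-1) ^ r * (k + 1) * pascal

lemma coeffSum_zero_right (k n : ℕ) : coeffSum k n 0 = coeffFormula k n 0 := by
  rw [coeffSum, sum_eq_single (0, n)]
  · have hsign : ((-1 : ℤ) ^ n) ^ 2 = 1 := by rw [← pow_mul, pow_mul', neg_one_sq, one_pow]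
    simp only [coeffTerm, coeffFormula, add_zero, zero_add, Nat.choose_self, one_mul,
      Nat.cast_zero, sub_zero, pow_zero, ichoose_zero_right, zero_sub, mul_one]
    rw [ichoose_neg_sub_one, Nat.choose_symm_add, ← mul_assoc, ← sq, hsign, one_mul]
  · rintro ⟨i, j⟩ hij hne
    have hi : i ≠ 0 := by rintro rfl; simp_all
    rw [coeffTerm, ichoose_of_neg _ (by omega), mul_zero]
  · simp

lemma coeffSum_eq_coeffFormula (k : ℕ) : coeffSum k = coeffFormula k :=
  eq_of_recurrence (fun n => (n : ℤ) + 2) (fun n => (n : ℤ) + 2 * k + 2)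
    (fun n => (n : ℤ) + k + 2) (fun n => by positivity) (coeffSum_recurrence k)
    (coeffFormula_recurrence k) (funext (coeffSum_zero_left k)) (funext (coeffSum_one_left k))
    (coeffSum_zero_right k)

theorem stmt1 (k m r : ℕ) (h : 2 * k ≤ m) :
    ∑ i ∈ range (m - 2 * k + 1),
        (-1 : ℤ) ^ (r + i) * ((k + i).choose k : ℤ) * ((m - k - i).choose k : ℤ) *
          ichoose (2 * k + 1) ((r : ℤ) - i) =
      (-1 : ℤ) ^ (r + m) * ((m + 1).choose r : ℤ) * ichoose ((r : ℤ) - k - 1) ((m : ℤ) - 2 * k) := by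
  obtain ⟨n, rfl⟩ : ∃ n, m = n + 2 * k := ⟨m - 2 * k, by omega⟩
  calc _ = ∑ i ∈ range (n + 1), coeffTerm k r i (n - i) := by
        refine sum_congr (by rw [Nat.add_sub_cancel]) fun i hi => ?_
        rw [coeffTerm, show n + 2 * k - k - i = k + (n - i) by grind]
        push_cast; ring
    _ = coeffFormula k n r := by
        rw [← coeffSum_eq_coeffFormula, coeffSum, Nat.sum_antidiagonal_eq_sum_range_succ_mk]
    _ = _ := by
        rw [coeffFormula, show (n : ℤ) + 2 * k + 1 = (n + 2 * k + 1 : ℕ) by push_cast; ring,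
          ichoose_natCast, show ((n + 2 * k : ℕ) : ℤ) - 2 * k = n by push_cast; ring,
          show r + (n + 2 * k) = r + n + 2 * k by ring, pow_add _ (r + n), pow_mul, neg_one_sq,
          one_pow, mul_one]
end

section
/- For all positive integers l and all nonnegative integers m, in the field of rational functions in q: ([l][l+1]/q^l)^{m+1} - ([l-1][l]/q^{l-1})^{m+1} = [2] \sum_{k=0}^{\lfloor m/2 \rfloor} h_{m-2k}(\{1,q\}^{k+1}) \cdot ([2l]/[2]) \cdot [l]^{2(m-k)} \cdot q^{-l(m-k+1)}. -/
open Finset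

/-- The `q`-integer `[n] = (1-q^n)/(1-q)` in `ℚ(q)`. -/
noncomputable def qint (n : ℕ) : RatFunc ℚ :=
  (1 - RatFunc.X ^ n) / (1 - RatFunc.X)

/-- `h_j({1,q}^{k+1})`: the complete homogeneous symmetric polynomial of degree `j`
in `2(k+1)` variables, `k+1` specialized to `q` and `k+1` to `1`. -/
noncomputable def hcomp (j k : ℕ) : RatFunc ℚ :=
  ∑ i ∈ range (j + 1),
    ((k + i).choose k : RatFunc ℚ) * ((j + k - i).choose k : RatFunc ℚ) * RatFunc.X ^ i

/-!
With `u = [l]²/q^l`, the bases `A = [l][l+1]/q^l` and `B = [l-1][l]/q^(l-1)` satisfy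
`A + B = (1+q)u`, `AB = qu² - u` and `A - B = [2l]/q^l`, so the identity reads
`A^(m+1) - B^(m+1) = (A - B) S_m` with `S_m = ∑_k h_{m-2k}({1,q}^{k+1}) u^(m-k)`.
This holds for any `A, B` with that sum and product, since `S_m` obeys the recurrence
`S_(m+2) = (A+B) S_(m+1) - AB S_m` of the complete homogeneous polynomials `h_m(A, B)`.
The recurrence is read off generating functions: `h_j({1,q}^d) u^j` is the coefficient of `X^j`
in `H_d = ((1-quX)(1-uX))^(-d)`, and multiplying `∑_{k<N} u^k X^(2k) H_(k+1)` by `(1-quX)(1-uX)`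
telescopes to `1 + uX² ∑_{k<N-1} u^k X^(2k) H_(k+1)`.
-/

section HomogeneousSeries

open PowerSeries

variable {R : Type*} [CommRing R]

def hOneQ (q : R) (j k : ℕ) : R :=
  ∑ i ∈ range (j + 1), ((k + i).choose k : R) * ((j + k - i).choose k : R) * q ^ i

noncomputable def hSeries (q u : R) (d : ℕ) : R⟦X⟧ :=
  rescale (q * u) (invOneSubPow R d).val * rescale u (invOneSubPow R d).val

def hSum (q u : R) (m : ℕ) : R :=
  ∑ k ∈ range (m / 2 + 1), hOneQ q (m - 2 * k) k * u ^ (m - k)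

noncomputable def hSumSeries (q u : R) (N : ℕ) : R⟦X⟧ :=
  ∑ k ∈ range N, C (u ^ k) * X ^ (2 * k) * hSeries q u (k + 1)

variable (q u : R)

theorem coeff_hSeries_succ (j k : ℕ) :
    coeff j (hSeries q u (k + 1)) = hOneQ q j k * u ^ j := by
  rw [hSeries, coeff_mul, Nat.sum_antidiagonal_eq_sum_range_succ_mk, hOneQ, sum_mul]
  refine sum_congr rfl fun i hi => ?_
  have hij : i ≤ j := Nat.lt_succ_iff.mp (mem_range.mp hi)
  simp only [coeff_rescale, invOneSubPow_val_succ_eq_mk_add_choose, coeff_mk]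
  rw [show j + k - i = k + (j - i) by omega,
    show u ^ j = u ^ i * u ^ (j - i) by rw [← pow_add, Nat.add_sub_cancel' hij]]
  ring

theorem hSeries_zero : hSeries q u 0 = 1 := by
  simp [hSeries, invOneSubPow_zero]

theorem one_sub_mul_one_sub_mul_hSeries_succ (d : ℕ) :
    (1 - C (q * u) * X) * (1 - C u * X) * hSeries q u (d + 1) = hSeries q u d := by
  have h := one_sub_pow_mul_invOneSubPow_val_add_eq_invOneSubPow_val R d 1
  rw [pow_one] at h
  simp only [hSeries, ← h, map_mul, map_sub, map_one, rescale_X]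
  ring

theorem coeff_one_sub_mul_one_sub_mul (f : R⟦X⟧) (m : ℕ) :
    coeff (m + 2) ((1 - C (q * u) * X) * (1 - C u * X) * f) =
      coeff (m + 2) f - (1 + q) * u * coeff (m + 1) f + q * u ^ 2 * coeff m f := by
  have hX2 : coeff (m + 2) (X ^ 2 * f) = coeff m f := coeff_X_pow_mul f 2 m
  have expand : (1 - C (q * u) * X) * (1 - C u * X) * f =
      f - C ((1 + q) * u) * (X * f) + C (q * u ^ 2) * (X ^ 2 * f) := by
    simp only [map_mul, map_add, map_one, map_pow]; ring
  rw [expand, map_add, map_sub, coeff_C_mul, coeff_C_mul, hX2, coeff_succ_X_mul]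

theorem coeff_hSumSeries {m N : ℕ} (hN : m / 2 < N) :
    coeff m (hSumSeries q u N) = hSum q u m := by
  have hterm : ∀ k, coeff m (C (u ^ k) * X ^ (2 * k) * hSeries q u (k + 1)) =
      if 2 * k ≤ m then hOneQ q (m - 2 * k) k * u ^ (m - k) else 0 := by
    intro k
    rw [mul_assoc, coeff_C_mul, coeff_X_pow_mul', coeff_hSeries_succ]
    split_ifs with hk
    · rw [mul_left_comm, ← pow_add, show k + (m - 2 * k) = m - k by omega]
    · rw [mul_zero]
  have hrange : (range N).filter (fun k => 2 * k ≤ m) = range (m / 2 + 1) := by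
    ext k; simp only [mem_filter, mem_range]; omega
  rw [hSumSeries, map_sum, sum_congr rfl fun k _ => hterm k, ← sum_filter, hrange, hSum]

theorem one_sub_mul_one_sub_mul_hSumSeries_succ (N : ℕ) :
    (1 - C (q * u) * X) * (1 - C u * X) * hSumSeries q u (N + 1) =
      1 + C u * X ^ 2 * hSumSeries q u N := by
  rw [hSumSeries, sum_range_succ', add_comm, mul_add, mul_sum, hSumSeries, mul_sum]
  congr 1
  · rw [pow_zero, map_one, one_mul, mul_zero, pow_zero, one_mul, zero_add,
      one_sub_mul_one_sub_mul_hSeries_succ, hSeries_zero]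
  · refine sum_congr rfl fun k _ => ?_
    rw [← one_sub_mul_one_sub_mul_hSeries_succ q u (k + 1)]
    simp only [pow_succ, map_mul, mul_add, mul_one]
    ring

theorem hSum_zero : hSum q u 0 = 1 := by
  simp [hSum, hOneQ]

theorem hSum_one : hSum q u 1 = (1 + q) * u := by
  simp [hSum, hOneQ, sum_range_succ]

theorem hSum_add_two (m : ℕ) :
    hSum q u (m + 2) = (1 + q) * u * hSum q u (m + 1) - (q * u ^ 2 - u) * hSum q u m := by
  have h := congrArg (coeff (m + 2)) (one_sub_mul_one_sub_mul_hSumSeries_succ q u (m + 2))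
  rw [coeff_one_sub_mul_one_sub_mul, map_add, coeff_one, if_neg (by omega), zero_add,
    mul_assoc (C u), coeff_C_mul, coeff_X_pow_mul] at h
  rw [coeff_hSumSeries q u (by omega : (m + 2) / 2 < m + 2 + 1),
    coeff_hSumSeries q u (by omega : (m + 1) / 2 < m + 2 + 1),
    coeff_hSumSeries q u (by omega : m / 2 < m + 2 + 1),
    coeff_hSumSeries q u (by omega : m / 2 < m + 2)] at h
  linear_combination h

theorem pow_succ_sub_pow_succ_eq_mul_hSum {A B : R} (hsum : A + B = (1 + q) * u)
    (hprod : A * B = q * u ^ 2 - u) (m : ℕ) :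
    A ^ (m + 1) - B ^ (m + 1) = (A - B) * hSum q u m := by
  induction m using Nat.twoStepInduction with
  | zero => rw [hSum_zero, zero_add, pow_one, pow_one, mul_one]
  | one => rw [hSum_one]; linear_combination (A - B) * hsum
  | more n h₀ h₁ =>
    rw [hSum_add_two]
    linear_combination (A + B) * h₁ - A * B * h₀ + (A - B) * hSum q u (n + 1) * hsum
      - (A - B) * hSum q u n * hprod

end HomogeneousSeries

theorem one_sub_X_pow_ne_zero {n : ℕ} (hn : 0 < n) : (1 : RatFunc ℚ) - RatFunc.X ^ n ≠ 0 := by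
  rw [sub_ne_zero, ne_comm, ← RatFunc.algebraMap_X, ← map_pow,
    ← map_one (algebraMap (Polynomial ℚ) (RatFunc ℚ)), Ne, (RatFunc.algebraMap_injective ℚ).eq_iff]
  intro h
  simpa [hn.ne'] using congrArg Polynomial.natDegree h

theorem one_sub_X_ne_zero : (1 : RatFunc ℚ) - RatFunc.X ≠ 0 := by
  simpa using one_sub_X_pow_ne_zero one_pos

theorem qint_ne_zero {n : ℕ} (hn : 0 < n) : qint n ≠ 0 :=
  div_ne_zero (one_sub_X_pow_ne_zero hn) one_sub_X_ne_zero

noncomputable def qProd (n : ℕ) : RatFunc ℚ :=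
  qint n * qint (n + 1) / RatFunc.X ^ n

theorem hcomp_eq_hOneQ : hcomp = hOneQ RatFunc.X := rfl

section
open RatFunc

theorem qProd_succ_add_qProd (n : ℕ) :
    qProd (n + 1) + qProd n = (1 + X) * (qint (n + 1) ^ 2 / X ^ (n + 1)) := by
  simp only [qProd, qint]
  field_simp [one_sub_X_ne_zero, X_ne_zero]
  ring

theorem qProd_succ_mul_qProd (n : ℕ) :
    qProd (n + 1) * qProd n =
      X * (qint (n + 1) ^ 2 / X ^ (n + 1)) ^ 2 - qint (n + 1) ^ 2 / X ^ (n + 1) := by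
  simp only [qProd, qint]
  field_simp [one_sub_X_ne_zero, X_ne_zero]
  ring

theorem qProd_succ_sub_qProd (n : ℕ) :
    qProd (n + 1) - qProd n = qint (2 * (n + 1)) / X ^ (n + 1) := by
  simp only [qProd, qint]
  field_simp [one_sub_X_ne_zero, X_ne_zero]
  ring

end

theorem stmt3 (l : ℕ) (hl : 0 < l) (m : ℕ) :
    (qint l * qint (l + 1) / RatFunc.X ^ l) ^ (m + 1) -
        (qint (l - 1) * qint l / RatFunc.X ^ (l - 1)) ^ (m + 1) =
      qint 2 * ∑ k ∈ range (m / 2 + 1),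
          hcomp (m - 2 * k) k * (qint (2 * l) / qint 2) * qint l ^ (2 * (m - k)) *
            RatFunc.X ^ (-((l : ℤ) * ((m : ℤ) - k + 1))) := by
  obtain ⟨n, rfl⟩ : ∃ n, l = n + 1 := ⟨l - 1, by omega⟩
  show qProd (n + 1) ^ (m + 1) - qProd n ^ (m + 1) = _
  rw [pow_succ_sub_pow_succ_eq_mul_hSum RatFunc.X _ (qProd_succ_add_qProd n)
    (qProd_succ_mul_qProd n), qProd_succ_sub_qProd, hSum, mul_sum, mul_sum]
  refine sum_congr rfl fun k hk => ?_
  have hkm : k ≤ m := by have := mem_range.mp hk; omega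
  rw [show -(((n + 1 : ℕ) : ℤ) * ((m : ℤ) - k + 1)) = -(((n + 1) * (m - k + 1) : ℕ) : ℤ) by
      push_cast [Nat.cast_sub hkm]; ring, zpow_neg, zpow_natCast, pow_mul RatFunc.X, hcomp_eq_hOneQ]
  have hq2 := qint_ne_zero (show 0 < 2 by norm_num)
  have hX : (RatFunc.X : RatFunc ℚ) ^ (n + 1) ≠ 0 := pow_ne_zero _ RatFunc.X_ne_zero
  generalize (RatFunc.X : RatFunc ℚ) ^ (n + 1) = Y at hX ⊢
  rw [div_pow, ← pow_mul, pow_succ]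
  field_simp
end

section
/- Let A = (A_{i,j})_{i,j \in \{1,\dots,m\}} be an invertible lower triangular matrix over a commutative field and let B be its inverse. Then for all 1 \le k \le n \le m, B_{n,k} = \frac{(-1)^{n-k}}{A_{k,k} A_{k+1,k+1} \cdots A_{n,n}} \det\left( A_{k+i+1, k+j} \right)_{i,j \in \{0,1,\dots,n-k-1\}}. -/
/-!
Both `A` and `B = A⁻¹` are lower triangular, so in `(B * A) i j` with `k ≤ j ≤ i ≤ n` only the
indices between `k` and `n` contribute: the principal block `C` of `B` on `{k, …, n}` is the
inverse of the corresponding block of `A`. The corner entry `C⁻¹ (n - k) 0` is the cofactor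
`(-1) ^ (n - k)` times the minor of `C` without its first row and last column, divided by
`det C`, and `det C` is the product of the diagonal entries `A k k ⋯ A n n`.
-/

open Finset

namespace Matrix

variable {α β R : Type*}

theorem IsLowerTriangular.submatrix [Zero R] [Preorder α] [Preorder β] {A : Matrix α α R}
    (hA : A.IsLowerTriangular) {f : β → α} (hf : StrictMono f) :
    (A.submatrix f f).IsLowerTriangular :=
  fun _ _ hij => hA (hf hij)

theorem IsLowerTriangular.of_mul_eq_one [Fintype α] [DecidableEq α] [LinearOrder α] [CommRing R]
    {A B : Matrix α α R} (hA : A.IsLowerTriangular) (hBA : B * A = 1) :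
    B.IsLowerTriangular := by
  let := invertibleOfLeftInverse A B hBA
  rw [← inv_eq_left_inv hBA]
  exact blockTriangular_inv_of_blockTriangular hA

theorem submatrix_mul_of_isLowerTriangular [Fintype α] [Fintype β] [LinearOrder α]
    [NonUnitalNonAssocSemiring R] {A B : Matrix α α R} (hA : A.IsLowerTriangular)
    (hB : B.IsLowerTriangular) {f : β → α} (hf : Function.Injective f)
    (hconn : (Set.range f).OrdConnected) :
    (A * B).submatrix f f = A.submatrix f f * B.submatrix f f := by
  ext i j
  simp only [mul_apply, submatrix_apply]
  refine (Fintype.sum_of_injective f hf _ _ (fun l hl => ?_) fun _ => rfl).symm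
  rcases lt_or_ge (f i) l with hil | hli
  · exact mul_eq_zero_of_left (hA hil) _
  rcases lt_or_ge l (f j) with hlj | hjl
  · exact mul_eq_zero_of_right _ (hB hlj)
  · exact absurd (hconn.out ⟨j, rfl⟩ ⟨i, rfl⟩ ⟨hjl, hli⟩) hl

theorem adjugate_last_zero {N : ℕ} [CommRing R] (C : Matrix (Fin (N + 1)) (Fin (N + 1)) R) :
    C.adjugate (Fin.last N) 0 = (-1) ^ N * (C.submatrix Fin.succ Fin.castSucc).det := by
  simp [adjugate_fin_succ_eq_det_submatrix]

theorem inv_last_zero {N : ℕ} {F : Type*} [Field F] (C : Matrix (Fin (N + 1)) (Fin (N + 1)) F) :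
    C⁻¹ (Fin.last N) 0 = (-1) ^ N / C.det * (C.submatrix Fin.succ Fin.castSucc).det := by
  rw [inv_def, smul_apply, adjugate_last_zero, Ring.inverse_eq_inv', smul_eq_mul]
  ring

end Matrix

namespace Fin

variable {m : ℕ} (k : Fin m) (N : ℕ) (h : k + N < m)

def intervalFrom : Fin (N + 1) → Fin m :=
  fun i => ⟨k + i, by omega⟩

theorem strictMono_intervalFrom : StrictMono (intervalFrom k N h) :=
  fun _ _ hij => Nat.add_lt_add_left hij k

theorem range_intervalFrom : Set.range (intervalFrom k N h) = Set.Icc k ⟨k + N, h⟩ := by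
  ext l
  simp only [Set.mem_range, Set.mem_Icc, Fin.le_def, intervalFrom, Fin.ext_iff]
  constructor
  · rintro ⟨i, hi⟩
    omega
  · intro hl
    exact ⟨⟨l - k, by omega⟩, by simp only; omega⟩

theorem prod_intervalFrom {M : Type*} [CommMonoid M] (g : Fin m → M) :
    ∏ i, g (intervalFrom k N h i) = ∏ l ∈ Icc k ⟨k + N, h⟩, g l := by
  have himage : univ.map ⟨_, (strictMono_intervalFrom k N h).injective⟩ =
      Icc k ⟨k + N, h⟩ := by
    simpa [← coe_inj] using range_intervalFrom k N h
  rw [← himage, prod_map]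
  rfl

end Fin

open Matrix in
theorem stmt5 (F : Type*) [Field F] (m : ℕ) (A B : Matrix (Fin m) (Fin m) F)
    (hLT : ∀ i j : Fin m, i < j → A i j = 0)
    (hB' : B * A = 1)
    (k n : Fin m) (hkn : k ≤ n) :
    B n k =
      ((-1 : F) ^ ((n : ℕ) - (k : ℕ)) / ∏ i ∈ Finset.Icc k n, A i i) *
        Matrix.det (Matrix.of fun i j : Fin ((n : ℕ) - (k : ℕ)) =>
          A ⟨(k : ℕ) + i + 1, by have := i.isLt; have := n.isLt; omega⟩
            ⟨(k : ℕ) + j, by have := j.isLt; have := n.isLt; omega⟩) := by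
  have hA : A.IsLowerTriangular := fun i j => hLT i j
  have hlen : (k : ℕ) + (n - k) < m := by omega
  set f := Fin.intervalFrom k (n - k) hlen
  have hf : StrictMono f := Fin.strictMono_intervalFrom k _ hlen
  have hn : (⟨k + (n - k), hlen⟩ : Fin m) = n := Fin.ext (by simp only; omega)
  have hinv : (A.submatrix f f)⁻¹ = B.submatrix f f := by
    refine inv_eq_left_inv ?_
    rw [← submatrix_mul_of_isLowerTriangular (hA.of_mul_eq_one hB') hA hf.injective
      (Fin.range_intervalFrom k _ hlen ▸ Set.ordConnected_Icc), hB', submatrix_one f hf.injective]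
  have hdet : (A.submatrix f f).det = ∏ i ∈ Icc k n, A i i := by
    rw [det_of_isLowerTriangular _ (hA.submatrix hf)]
    exact (Fin.prod_intervalFrom k _ hlen fun i => A i i).trans (by rw [hn])
  calc B n k = (A.submatrix f f)⁻¹ (Fin.last _) 0 := by
        rw [hinv, submatrix_apply]
        exact congrArg (B · k) hn.symm
    _ = _ := by rw [inv_last_zero, hdet]; rfl
end

section
/- Define P_{m,k}(q) by the determinant P_{m,k} = \det( h_{m-k-i+2j-1}(\{1,q\}^{i-j+2}) )_{i,j \in \{0,\dots,k-1\}}, with P_{m,0} = 1. Then for each n, the matrix ((-1)^{k-m} \frac{[m]!}{[k+1]!} P_{k,k-m})_{k,m \in \{0,\dots,n\}} is the inverse of the matrix (h_{2m-k}(\{1,q\}^{k-m+1}))_{k,m \in \{0,\dots,n\}} over \mathbb{Q}(q). -/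
open Finset

/-- The `q`-factorial `[m]! = ∏_{i=1}^m [i]`. -/
noncomputable def qfact (m : ℕ) : RatFunc ℚ := ∏ i ∈ Icc 1 m, qint i

/-- `h_j({1,q}^r)`: the complete homogeneous symmetric polynomial of degree `j` in `2r`
variables, `r` specialized to `q` and `r` to `1`; it vanishes for `j < 0`, or for `r ≤ 0`
with `j > 0`, and `h_0 = 1`. -/
noncomputable def hgen (j r : ℤ) : RatFunc ℚ :=
  if 0 ≤ j ∧ 0 < r then
    ∑ i ∈ range (j.toNat + 1),
      (((r - 1).toNat + i).choose (r - 1).toNat : RatFunc ℚ) *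
        ((j.toNat + (r - 1).toNat - i).choose (r - 1).toNat : RatFunc ℚ) * RatFunc.X ^ i
  else if j = 0 then 1 else 0

/-- The `q`-Faulhaber polynomial
`P_{m,k} = det( h_{m-k-i+2j-1}({1,q}^{i-j+2}) )_{i,j ∈ {0,…,k-1}}`. -/
noncomputable def P (m k : ℕ) : RatFunc ℚ :=
  Matrix.det (Matrix.of fun i j : Fin k =>
    hgen ((m : ℤ) - k - i + 2 * j - 1) ((i : ℤ) - j + 2))

/-!
Write `A` and `B` for the two matrices (entries `hEntry` and `invEntry`); `B * A = 1` follows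
from `A * B = 1`. For `m ≤ k`, the entry `(A * B) k m = ∑_{j ≤ k - m} A k (m + j) * B (m + j) m`
is, up to the factor `[m]!/[k+1]!`, the Laplace expansion along row `0` of `laplaceMatrix m k`,
whose row `0` is `A k m, …, A k k` and whose other rows are `h_{m+2j-i}({1,q}^{i-j+1})`.
Deleting row `0` and column `j` leaves a block lower triangular matrix: its diagonal blocks are
the matrix defining `P_{m+j,j}` and a triangular matrix with diagonal `[m+j+2], …, [k+1]`.
The determinant of `laplaceMatrix m k` is `[m+1]` for `m = k` and vanishes for `m < k`, as
row `k - m` then repeats row `0`.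
-/

theorem RatFunc.X_pow_ne_one {K : Type*} [Field K] {t : ℕ} (ht : t ≠ 0) :
    (RatFunc.X : RatFunc K) ^ t ≠ 1 := by
  intro h
  rw [← RatFunc.algebraMap_X, ← map_pow, ← map_one (algebraMap (Polynomial K) _)] at h
  have := congrArg Polynomial.natDegree (RatFunc.algebraMap_injective K h)
  simp only [Polynomial.natDegree_X_pow, Polynomial.natDegree_one] at this
  exact ht this

lemma qint_ne_zero_s7 {t : ℕ} (ht : t ≠ 0) : qint t ≠ 0 :=
  div_ne_zero (sub_ne_zero.mpr (RatFunc.X_pow_ne_one ht).symm)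
    (sub_ne_zero.mpr (by simpa using (RatFunc.X_pow_ne_one (K := ℚ) one_ne_zero).symm))

lemma qfact_ne_zero (m : ℕ) : qfact m ≠ 0 :=
  prod_ne_zero_iff.mpr fun i hi => qint_ne_zero_s7 (by simp at hi; omega)

lemma qfact_add (a b : ℕ) : qfact (a + b) = qfact a * ∏ i ∈ range b, qint (a + i + 1) := by
  induction b with
  | zero => simp
  | succ b ih =>
    rw [← add_assoc, qfact, prod_Icc_succ_top (by omega), ← qfact, ih, prod_range_succ,
      mul_assoc]

lemma qfact_succ (m : ℕ) : qfact (m + 1) = qfact m * qint (m + 1) := by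
  simpa using qfact_add m 1

lemma hgen_eq_zero_of_nonpos {j r : ℤ} (hr : r ≤ 0) (hj : j ≠ 0) : hgen j r = 0 := by
  rw [hgen, if_neg (by omega), if_neg hj]

lemma hgen_one {j : ℤ} (hj : 0 ≤ j) : hgen j 1 = qint (j.toNat + 1) := by
  rw [hgen, if_pos ⟨hj, one_pos⟩]
  simp only [sub_self, Int.toNat_zero, Nat.choose_zero_right, Nat.cast_one, one_mul,
    Nat.add_zero, zero_add]
  rw [geom_sum_eq (by simpa using RatFunc.X_pow_ne_one (K := ℚ) one_ne_zero), qint,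
    ← neg_div_neg_eq, neg_sub, neg_sub]

lemma det_hgen_lowerTriangular (a L : ℕ) :
    (Matrix.of fun i c : Fin L => hgen ((a : ℤ) + 2 * c - i) ((i : ℤ) - c + 1)).det
      = ∏ i ∈ range L, qint (a + i + 1) := by
  rw [Matrix.det_of_isLowerTriangular, ← Fin.prod_univ_eq_prod_range]
  · refine prod_congr rfl fun i _ => ?_
    rw [Matrix.of_apply, sub_self, zero_add,
      show (a : ℤ) + 2 * i - i = ((a + i : ℕ) : ℤ) by push_cast; ring,
      hgen_one (Int.natCast_nonneg _), Int.toNat_natCast]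
  · intro i c hic
    rw [OrderDual.toDual_lt_toDual, Fin.lt_def] at hic
    exact hgen_eq_zero_of_nonpos (by omega) (by omega)

lemma Fin.val_succAbove {n : ℕ} (p : Fin (n + 1)) (i : Fin n) :
    (p.succAbove i : ℕ) = if (i : ℕ) < p then (i : ℕ) else (i : ℕ) + 1 := by
  unfold Fin.succAbove
  split_ifs <;> simp_all [Fin.lt_def]

lemma hgen_minor_reindex_eq_fromBlocks (m K : ℕ) (j : Fin (K + 1)) :
    (Matrix.of fun x y : Fin K =>
        hgen ((m : ℤ) + 2 * (j.succAbove y : ℕ) - (x + 1)) ((x : ℤ) + 1 - (j.succAbove y : ℕ) + 1)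
      ).submatrix (finSumFinEquiv.trans (finCongr (by omega : (j : ℕ) + (K - j) = K)))
        (finSumFinEquiv.trans (finCongr (by omega : (j : ℕ) + (K - j) = K)))
      = Matrix.fromBlocks
          (Matrix.of fun x y : Fin j =>
            hgen (((m + j : ℕ) : ℤ) - (j : ℕ) - x + 2 * y - 1) ((x : ℤ) - y + 2))
          0
          (Matrix.of fun (x : Fin (K - j)) (y : Fin j) =>
            hgen ((m : ℤ) - 1 - j - x + 2 * y) ((j : ℤ) + x - y + 2))
          (Matrix.of fun x y : Fin (K - j) =>
            hgen (((m + j + 1 : ℕ) : ℤ) + 2 * y - x) ((x : ℤ) - y + 1)) := by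
  ext (x | x) (y | y) <;>
    simp only [Matrix.submatrix_apply, Matrix.of_apply, Matrix.fromBlocks_apply₁₁,
      Matrix.fromBlocks_apply₁₂, Matrix.fromBlocks_apply₂₁, Matrix.fromBlocks_apply₂₂,
      Matrix.zero_apply, Equiv.trans_apply, finCongr_apply, Fin.val_succAbove, Fin.val_cast,
      finSumFinEquiv_apply_left, finSumFinEquiv_apply_right, Fin.val_castAdd, Fin.val_natAdd]
  · rw [if_pos (by omega)]; congr 1 <;> push_cast <;> ring
  · rw [if_neg (by omega)]
    exact hgen_eq_zero_of_nonpos (by push_cast; omega) (by push_cast; omega)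
  · rw [if_pos (by omega)]; congr 1 <;> push_cast <;> ring
  · rw [if_neg (by omega)]; congr 1 <;> push_cast <;> ring

lemma det_hgen_minor (m K : ℕ) (j : Fin (K + 1)) :
    (Matrix.of fun x y : Fin K =>
        hgen ((m : ℤ) + 2 * (j.succAbove y : ℕ) - (x + 1)) ((x : ℤ) + 1 - (j.succAbove y : ℕ) + 1)
      ).det = P (m + j) j * ∏ i ∈ range (K - j), qint (m + j + 1 + i + 1) := by
  rw [← Matrix.det_submatrix_equiv_self
      (finSumFinEquiv.trans (finCongr (by omega : (j : ℕ) + (K - j) = K))),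
    hgen_minor_reindex_eq_fromBlocks, Matrix.det_fromBlocks_zero₁₂, det_hgen_lowerTriangular, P]

noncomputable def hEntry (k m : ℕ) : RatFunc ℚ := hgen (2 * (m : ℤ) - k) ((k : ℤ) - m + 1)

noncomputable def invEntry (k m : ℕ) : RatFunc ℚ :=
  if m ≤ k then (-1) ^ (k - m) * (qfact m / qfact (k + 1)) * P k (k - m) else 0

lemma hEntry_eq_zero_of_lt {k m : ℕ} (h : k < m) : hEntry k m = 0 :=
  hgen_eq_zero_of_nonpos (by omega) (by omega)

lemma invEntry_eq_zero_of_lt {k m : ℕ} (h : k < m) : invEntry k m = 0 :=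
  if_neg (by omega)

noncomputable def laplaceMatrix (m k : ℕ) :
    Matrix (Fin (k - m + 1)) (Fin (k - m + 1)) (RatFunc ℚ) :=
  Matrix.of fun i j =>
    if (i : ℕ) = 0 then hEntry k (m + j) else hgen ((m : ℤ) + 2 * (j : ℕ) - i) ((i : ℤ) - j + 1)

lemma det_laplaceMatrix_self (m : ℕ) : (laplaceMatrix m m).det = qint (m + 1) := by
  rw [← Matrix.det_submatrix_equiv_self (finCongr (by omega : 1 = m - m + 1)),
    Matrix.det_fin_one]
  simp only [laplaceMatrix, hEntry, Matrix.submatrix_apply, Matrix.of_apply, finCongr_apply,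
    Fin.val_cast, Fin.val_zero, if_true, add_zero, sub_self, zero_add]
  rw [show 2 * (m : ℤ) - m = m by ring, hgen_one (Int.natCast_nonneg m), Int.toNat_natCast]

lemma det_laplaceMatrix_of_lt {m k : ℕ} (h : m < k) : (laplaceMatrix m k).det = 0 := by
  refine Matrix.det_zero_of_row_eq (i := ⟨k - m, by omega⟩) (j := 0)
    (by simp [Fin.ext_iff]; omega) (funext fun c => ?_)
  simp only [laplaceMatrix, Matrix.of_apply, Fin.val_zero, if_pos, if_neg (by omega : k - m ≠ 0),
    hEntry]
  congr 1 <;> push_cast <;> omega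

lemma det_laplaceMatrix_minor (m k : ℕ) (j : Fin (k - m + 1)) :
    ((laplaceMatrix m k).submatrix Fin.succ j.succAbove).det
      = P (m + j) j * ∏ i ∈ range (k - m - j), qint (m + j + 1 + i + 1) := by
  rw [← det_hgen_minor]
  rfl

lemma hEntry_mul_invEntry_eq_laplace_term {m k : ℕ} (hmk : m ≤ k) (j : Fin (k - m + 1)) :
    hEntry k (m + j) * invEntry (m + j) m = qfact m / qfact (k + 1) *
      ((-1) ^ (j : ℕ) * laplaceMatrix m k 0 j *
        ((laplaceMatrix m k).submatrix Fin.succ j.succAbove).det) := by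
  have hj := j.isLt
  have hfact : qfact (k + 1) = qfact (m + j + 1) *
      ∏ i ∈ range (k - m - j), qint (m + j + 1 + i + 1) := by
    rw [← qfact_add, show m + j + 1 + (k - m - j) = k + 1 by omega]
  have hprod : ∏ i ∈ range (k - m - j), qint (m + j + 1 + i + 1) ≠ 0 :=
    prod_ne_zero_iff.mpr fun i _ => qint_ne_zero_s7 (by omega)
  rw [det_laplaceMatrix_minor, hfact, invEntry, if_pos (by omega), Nat.add_sub_cancel_left,
    laplaceMatrix, Matrix.of_apply, Fin.val_zero, if_pos rfl]
  field_simp [qfact_ne_zero (m + j + 1)]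

lemma sum_hEntry_mul_invEntry_eq_det {m k : ℕ} (hmk : m ≤ k) :
    ∑ j ∈ range (k - m + 1), hEntry k (m + j) * invEntry (m + j) m
      = qfact m / qfact (k + 1) * (laplaceMatrix m k).det := by
  rw [Matrix.det_succ_row_zero, mul_sum,
    ← Fin.sum_univ_eq_sum_range (fun j => hEntry k (m + j) * invEntry (m + j) m)]
  exact sum_congr rfl fun j _ => hEntry_mul_invEntry_eq_laplace_term hmk j

lemma sum_hEntry_mul_invEntry {N k m : ℕ} (hk : k < N) :
    ∑ t ∈ range N, hEntry k t * invEntry t m = if k = m then 1 else 0 := by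
  rcases lt_or_ge k m with hkm | hmk
  · rw [if_neg hkm.ne]
    refine sum_eq_zero fun t _ => ?_
    rcases lt_or_ge k t with hkt | htk
    · rw [hEntry_eq_zero_of_lt hkt, zero_mul]
    · rw [invEntry_eq_zero_of_lt (show t < m by omega), mul_zero]
  have hsupp : ∑ t ∈ range N, hEntry k t * invEntry t m
      = ∑ t ∈ Ico m (k + 1), hEntry k t * invEntry t m := by
    refine (sum_subset (fun t ht => by simp at ht ⊢; omega) fun t _ ht => ?_).symm
    rcases lt_or_ge k t with hkt | htm
    · rw [hEntry_eq_zero_of_lt hkt, zero_mul]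
    · rw [invEntry_eq_zero_of_lt (by simp at ht; omega), mul_zero]
  rw [hsupp, sum_Ico_eq_sum_range, Nat.sub_add_comm hmk, sum_hEntry_mul_invEntry_eq_det hmk]
  rcases hmk.eq_or_lt with rfl | hlt
  · rw [if_pos rfl, det_laplaceMatrix_self, qfact_succ]
    field_simp [qfact_ne_zero m, qint_ne_zero_s7 (Nat.succ_ne_zero m)]
  · rw [if_neg hlt.ne', det_laplaceMatrix_of_lt hlt, mul_zero]

theorem stmt7 (n : ℕ) :
    let A : Matrix (Fin (n + 1)) (Fin (n + 1)) (RatFunc ℚ) :=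
      Matrix.of fun k m => hgen (2 * (m : ℤ) - (k : ℤ)) ((k : ℤ) - (m : ℤ) + 1)
    let B : Matrix (Fin (n + 1)) (Fin (n + 1)) (RatFunc ℚ) :=
      Matrix.of fun k m =>
        if (m : ℕ) ≤ (k : ℕ) then
          (-1 : RatFunc ℚ) ^ ((k : ℕ) - (m : ℕ)) * (qfact m / qfact (k + 1)) *
            P k ((k : ℕ) - (m : ℕ))
        else 0
    A * B = 1 ∧ B * A = 1 := by
  intro A B
  have hAB : A * B = 1 := by
    ext k m
    have h := sum_hEntry_mul_invEntry (N := n + 1) (m := m) k.isLt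
    rw [← Fin.sum_univ_eq_sum_range (fun t => hEntry k t * invEntry t m)] at h
    rw [Matrix.mul_apply, Matrix.one_apply]
    simp only [Fin.ext_iff]
    exact h
  exact ⟨hAB, mul_eq_one_comm.mp hAB⟩
end
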